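/- arXiv:1402.5763 — 2 statements merged into one kernel-verified Lean document; each statement's English description precedes it below -/
import Mathlib

section
/- Let (𝒳, μ) be a probability space and let F = {f_1, …, f_M} ⊂ L_2(μ) be such that span(F) has dimension M. If B > 0 satisfies ‖f‖_{L∞} ≤ √B ‖f‖_{L2} for every f ∈ span(F), then B ≥ M. -/
/-!
Orthonormalize `f₁, …, f_M` in `L₂(μ)` to `φ₁, …, φ_M`. For a vector `d ∈ ℝ^M` the function
`∑ dⱼ φⱼ` lies in `span F` and has `L₂` norm `‖d‖`, so it is bounded by `√B ‖d‖` almost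
everywhere. Running `d` through a countable dense set and then, pointwise, choosing `d` parallel to
`(φⱼ(x))ⱼ` gives `∑ φⱼ(x)² ≤ B` for almost every `x`. Since each `φⱼ²` has integral one and `μ` is
a probability measure, integrating yields `M ≤ B`.
-/

open MeasureTheory Set Submodule

theorem norm_le_of_forall_abs_inner_le {E : Type*} [NormedAddCommGroup E]
    [InnerProductSpace ℝ E] {v : E} {C : ℝ} (hC : 0 ≤ C)
    (h : ∀ d, |inner ℝ d v| ≤ C * ‖d‖) : ‖v‖ ≤ C := by
  rcases (norm_nonneg v).eq_or_lt with hv | hv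
  · rwa [← hv]
  · refine le_of_mul_le_mul_right ?_ hv
    simpa [real_inner_self_eq_norm_sq, sq] using h v

theorem Orthonormal.norm_sum_smul {ι E : Type*} [Fintype ι] [NormedAddCommGroup E]
    [InnerProductSpace ℝ E] {φ : ι → E} (hφ : Orthonormal ℝ φ) (d : EuclideanSpace ℝ ι) :
    ‖∑ i, d i • φ i‖ = ‖d‖ := by
  rw [EuclideanSpace.norm_eq, ← Real.sqrt_sq (norm_nonneg _), ← real_inner_self_eq_norm_sq,
    hφ.inner_sum]
  simp [sq]

namespace MeasureTheory

theorem ae_forall_of_isClosed {α E : Type*} [MeasurableSpace α] {μ : Measure α}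
    [TopologicalSpace E] [TopologicalSpace.SeparableSpace E] {P : α → E → Prop}
    (hP : ∀ x, IsClosed {d | P x d}) (h : ∀ d, ∀ᵐ x ∂μ, P x d) : ∀ᵐ x ∂μ, ∀ d, P x d := by
  obtain ⟨s, hs, hs_dense⟩ := TopologicalSpace.exists_countable_dense E
  filter_upwards [(ae_ball_iff hs).2 fun d _ => h d] with x hx d
  exact (hP x).closure_subset_iff.2 hx (hs_dense d)

section Lp

variable {α ι E 𝕜 : Type*} [MeasurableSpace α] {μ : Measure α} {p : ENNReal}
  [NormedAddCommGroup E] [NormedRing 𝕜] [Module 𝕜 E] [IsBoundedSMul 𝕜 E]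

theorem Lp.coeFn_fun_sum_smul [Fintype ι] (c : ι → 𝕜) (f : ι → Lp E p μ) :
    ⇑(∑ i, c i • f i) =ᵐ[μ] fun x => ∑ i, c i • f i x := by
  filter_upwards [Lp.coeFn_fun_finsetSum Finset.univ fun i => c i • f i,
    ae_all_iff.2 fun i => Lp.coeFn_smul (c i) (f i)] with x hsum hsmul
  simp only [hsum, hsmul, Pi.smul_apply]

theorem MemLp.linearIndependent_toLp [Fintype ι] {F : ι → α → E}
    (hF : ∀ i, MemLp (F i) p μ) (hindep : ∀ c : ι → 𝕜, (∑ i, c i • F i) =ᵐ[μ] 0 → c = 0) :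
    LinearIndependent 𝕜 fun i => (hF i).toLp (F i) := by
  refine Fintype.linearIndependent_iff.2 fun c hc => congrFun (hindep c ?_)
  filter_upwards [Lp.coeFn_fun_sum_smul c fun i => (hF i).toLp (F i), ae_all_iff.2 fun i => (hF i).coeFn_toLp,
    Lp.coeFn_zero E p μ] with x hsum hF hzero
  rw [hc, hzero] at hsum
  simpa [Finset.sum_apply, hF] using hsum.symm

theorem MemLp.exists_mem_span_ae_eq {F : ι → α → E} (hF : ∀ i, MemLp (F i) p μ)
    {u : Lp E p μ} (hu : u ∈ span 𝕜 (range fun i => (hF i).toLp (F i))) :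
    ∃ f ∈ span 𝕜 (range F), u =ᵐ[μ] f := by
  induction hu using Submodule.span_induction with
  | mem _ h =>
    obtain ⟨i, rfl⟩ := h
    exact ⟨F i, subset_span (mem_range_self i), (hF i).coeFn_toLp⟩
  | zero => exact ⟨0, zero_mem _, Lp.coeFn_zero E p μ⟩
  | add u v _ _ hu hv =>
    obtain ⟨f, hf, hfu⟩ := hu
    obtain ⟨g, hg, hgv⟩ := hv
    exact ⟨f + g, add_mem hf hg, (Lp.coeFn_add u v).trans (hfu.add hgv)⟩
  | smul c u _ hu =>
    obtain ⟨f, hf, hfu⟩ := hu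
    exact ⟨c • f, smul_mem _ c hf, (Lp.coeFn_smul c u).trans (hfu.const_smul c)⟩

end Lp

theorem ae_norm_le_of_eLpNorm_top_le {α E : Type*} [MeasurableSpace α] {μ : Measure α}
    [NormedAddCommGroup E] {f : α → E} {C : ℝ} (hC : 0 ≤ C)
    (h : eLpNorm f ⊤ μ ≤ ENNReal.ofReal C) : ∀ᵐ x ∂μ, ‖f x‖ ≤ C := by
  rw [eLpNorm_exponent_top] at h
  filter_upwards [ae_le_eLpNormEssSup (f := f)] with x hx
  rw [← ENNReal.ofReal_le_ofReal_iff hC, ofReal_norm]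
  exact hx.trans h

namespace L2

variable {α ι : Type*} [MeasurableSpace α] {μ : Measure α} [Fintype ι] {φ : ι → Lp ℝ 2 μ}

theorem integral_sum_sq_of_orthonormal (hφ : Orthonormal ℝ φ) :
    ∫ x, ∑ i, φ i x ^ 2 ∂μ = Fintype.card ι := by
  have hsq : ∀ i, ∫ x, φ i x ^ 2 ∂μ = 1 := fun i => by
    have h := real_inner_self_eq_norm_sq (φ i)
    rw [hφ.1 i, one_pow, inner_def] at h
    simpa [sq] using h
  rw [integral_finsetSum _ fun i _ => (Lp.memLp (φ i)).integrable_sq]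
  simp [hsq]

theorem ae_sum_sq_le_of_orthonormal (hφ : Orthonormal ℝ φ) {C : ℝ} (hC : 0 ≤ C)
    (h : ∀ u ∈ span ℝ (range φ), ∀ᵐ x ∂μ, |u x| ≤ C * ‖u‖) :
    ∀ᵐ x ∂μ, ∑ i, φ i x ^ 2 ≤ C ^ 2 := by
  set v : α → EuclideanSpace ℝ ι := fun x => WithLp.toLp 2 fun i => φ i x
  have hdir : ∀ d : EuclideanSpace ℝ ι, ∀ᵐ x ∂μ, |inner ℝ d (v x)| ≤ C * ‖d‖ := by
    intro d
    have hu := h (∑ i, d i • φ i) (sum_mem fun i _ => smul_mem _ (d i) (subset_span (mem_range_self i)))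
    filter_upwards [hu, Lp.coeFn_fun_sum_smul d φ] with x hx hsum
    rw [hsum, hφ.norm_sum_smul] at hx
    simpa [v, PiLp.inner_apply, mul_comm] using hx
  filter_upwards [ae_forall_of_isClosed (fun x => isClosed_le (by fun_prop) (by fun_prop)) hdir]
    with x hx
  have hv : ∑ i, φ i x ^ 2 = ‖v x‖ ^ 2 := by simp [v, EuclideanSpace.norm_sq_eq]
  rw [hv]
  exact pow_le_pow_left₀ (norm_nonneg _) (norm_le_of_forall_abs_inner_le hC hx) 2

theorem card_le_sq_of_orthonormal [IsProbabilityMeasure μ] (hφ : Orthonormal ℝ φ) {C : ℝ}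
    (hC : 0 ≤ C) (h : ∀ u ∈ span ℝ (range φ), ∀ᵐ x ∂μ, |u x| ≤ C * ‖u‖) :
    (Fintype.card ι : ℝ) ≤ C ^ 2 :=
  calc (Fintype.card ι : ℝ) = ∫ x, ∑ i, φ i x ^ 2 ∂μ := (integral_sum_sq_of_orthonormal hφ).symm
    _ ≤ ∫ _, C ^ 2 ∂μ :=
      integral_mono_ae (integrable_finsetSum _ fun i _ => (Lp.memLp (φ i)).integrable_sq)
        (integrable_const _) (ae_sum_sq_le_of_orthonormal hφ hC h)
    _ = C ^ 2 := by simp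

end L2

end MeasureTheory

open InnerProductSpace in
theorem dim_le_of_Linfty_L2_equiv_general
    {𝒳 : Type*} [MeasurableSpace 𝒳] (μ : Measure 𝒳) [IsProbabilityMeasure μ]
    (M : ℕ) (F : Fin M → 𝒳 → ℝ)
    (hFL2 : ∀ j, MemLp (F j) 2 μ)
    -- `span F` has dimension `M` in `L₂(μ)`: the `f_j` are a.e. linearly independent
    (hindep : ∀ c : Fin M → ℝ, (∑ j, c j • F j) =ᵐ[μ] 0 → c = 0)
    (B : ℝ) (hB : 0 < B)
    (hBound : ∀ f ∈ Submodule.span ℝ (Set.range F),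
      eLpNorm f ⊤ μ ≤ ENNReal.ofReal (Real.sqrt B) * eLpNorm f 2 μ) :
    (M : ℝ) ≤ B := by
  set g : Fin M → Lp ℝ 2 μ := fun j => (hFL2 j).toLp (F j)
  have hφ := gramSchmidtNormed_orthonormal (MemLp.linearIndependent_toLp hFL2 hindep)
  have hspan : span ℝ (range (gramSchmidtNormed ℝ g)) = span ℝ (range g) := by
    rw [span_gramSchmidtNormed_range, span_gramSchmidt]
  have hbound : ∀ u ∈ span ℝ (range (gramSchmidtNormed ℝ g)),
      ∀ᵐ x ∂μ, |u x| ≤ Real.sqrt B * ‖u‖ := by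
    intro u hu
    obtain ⟨f, hf, hfu⟩ := MemLp.exists_mem_span_ae_eq hFL2 (hspan ▸ hu)
    have htop : eLpNorm u ⊤ μ ≤ ENNReal.ofReal (Real.sqrt B * ‖u‖) := by
      rw [ENNReal.ofReal_mul (Real.sqrt_nonneg B), ofReal_norm, Lp.enorm_def,
        eLpNorm_congr_ae hfu, eLpNorm_congr_ae hfu]
      exact hBound f hf
    simpa only [Real.norm_eq_abs] using ae_norm_le_of_eLpNorm_top_le (by positivity) htop
  simpa [Real.sq_sqrt hB.le] using L2.card_le_sq_of_orthonormal hφ (Real.sqrt_nonneg B) hbound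

/-- **Appendix fact** (Lecué–Mendelson). If `F = {f₁, …, f_M} ⊂ L₂(μ)` spans an `M`-dimensional
subspace (the `f_j` are linearly independent as elements of `L₂(μ)`) and
`‖f‖_{L∞} ≤ √B ‖f‖_{L₂}` for every `f ∈ span F`, then `B ≥ M`. -/
theorem dim_le_of_Linfty_L2_equiv
    {𝒳 : Type*} [MeasurableSpace 𝒳] (μ : Measure 𝒳) [IsProbabilityMeasure μ]
    (M : ℕ) (F : Fin M → 𝒳 → ℝ) (hFmeas : ∀ j, Measurable (F j))
    (hFL2 : ∀ j, MemLp (F j) 2 μ)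
    -- `span F` has dimension `M` in `L₂(μ)`: the `f_j` are a.e. linearly independent
    (hindep : ∀ c : Fin M → ℝ, (∑ j, c j • F j) =ᵐ[μ] 0 → c = 0)
    (B : ℝ) (hB : 0 < B)
    (hBound : ∀ f ∈ Submodule.span ℝ (Set.range F),
      eLpNorm f ⊤ μ ≤ ENNReal.ofReal (Real.sqrt B) * eLpNorm f 2 μ) :
    (M : ℝ) ≤ B :=
  dim_le_of_Linfty_L2_equiv_general μ M F hFL2 hindep B hB hBound
end

section
/- There exists an absolute constant c₁ > 0 such that for every integer N ≥ 2 and every real x ≥ 1, there exists a mean-zero random variable ζ with E ζ² = 1 such that, for independent copies ζ_1, …, ζ_N of ζ, P((1/N)∑_{i=1}^N ζ_i² ≥ x) ≥ c₁ / x. -/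
/-!
Take `ζ = ±√(N x)` with probability `1 / (2 N x)` each and `ζ = 0` otherwise, so that
`E ζ² = 1`. A single nonzero `ζᵢ` already gives `σ̂_N² ≥ x`, and some `ζᵢ` is nonzero with
probability `1 - (1 - 1 / (N x))^N ≥ 1 - e^{-1/x} ≥ 1 / (2x)`.
-/

open MeasureTheory ProbabilityTheory Set Real

noncomputable def symmThreePoint (p a : ℝ) : Measure ℝ :=
  ENNReal.ofReal (p / 2) • (Measure.dirac a + Measure.dirac (-a)) +
    ENNReal.ofReal (1 - p) • Measure.dirac 0

section symmThreePoint

variable {p : ℝ} (a : ℝ)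

lemma isProbabilityMeasure_symmThreePoint (hp₀ : 0 ≤ p) (hp₁ : p ≤ 1) :
    IsProbabilityMeasure (symmThreePoint p a) := by
  constructor
  simp only [symmThreePoint, Measure.add_apply, Measure.smul_apply, measure_univ, smul_eq_mul]
  rw [one_add_one_eq_two, mul_one, ← ENNReal.ofReal_ofNat 2, ← ENNReal.ofReal_mul (by linarith),
    ← ENNReal.ofReal_add (by positivity) (by linarith)]
  norm_num

lemma integral_symmThreePoint (hp₀ : 0 ≤ p) (hp₁ : p ≤ 1) (f : ℝ → ℝ) :
    ∫ y, f y ∂symmThreePoint p a = p / 2 * (f a + f (-a)) + (1 - p) * f 0 := by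
  have hint (b : ℝ) : Integrable f (Measure.dirac b) := integrable_dirac enorm_lt_top
  rw [symmThreePoint, integral_add_measure, integral_smul_measure, integral_smul_measure,
    integral_add_measure (hint a) (hint (-a)), integral_dirac, integral_dirac, integral_dirac,
    ENNReal.toReal_ofReal (by linarith), ENNReal.toReal_ofReal (by linarith), smul_eq_mul,
    smul_eq_mul]
  · exact ((hint a).add_measure (hint (-a))).smul_measure ENNReal.ofReal_ne_top
  · exact (hint 0).smul_measure ENNReal.ofReal_ne_top

lemma integral_id_symmThreePoint (hp₀ : 0 ≤ p) (hp₁ : p ≤ 1) :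
    ∫ y, y ∂symmThreePoint p a = 0 := by
  rw [integral_symmThreePoint a hp₀ hp₁ fun y => y]
  ring

lemma integral_sq_symmThreePoint (hp₀ : 0 ≤ p) (hp₁ : p ≤ 1) :
    ∫ y, y ^ 2 ∂symmThreePoint p a = p * a ^ 2 := by
  rw [integral_symmThreePoint a hp₀ hp₁ fun y => y ^ 2]
  ring

lemma measureReal_symmThreePoint_sq_lt (hp₀ : 0 ≤ p) (hp₁ : p ≤ 1) (ha : a ≠ 0) :
    (symmThreePoint p a).real {y | y ^ 2 < a ^ 2} = 1 - p := by
  have hs : MeasurableSet {y : ℝ | y ^ 2 < a ^ 2} := measurableSet_lt (by fun_prop) (by fun_prop)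
  have := isProbabilityMeasure_symmThreePoint a hp₀ hp₁
  rw [← integral_indicator_one hs, integral_symmThreePoint a hp₀ hp₁]
  simp [indicator, ha]

end symmThreePoint

lemma identDistrib_eval_pi {ι : Type*} [Fintype ι] {α : ι → Type*}
    [∀ i, MeasurableSpace (α i)] (μ : ∀ i, Measure (α i)) [∀ i, IsProbabilityMeasure (μ i)]
    (i : ι) :
    IdentDistrib (fun ω : ∀ j, α j => ω i) id (Measure.pi μ) (μ i) :=
  ⟨(measurable_pi_apply i).aemeasurable, aemeasurable_id, by
    rw [Measure.map_id, (measurePreserving_eval μ i).map_eq]⟩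

lemma measureReal_pi_exists_notMem {ι α : Type*} [Fintype ι] [MeasurableSpace α]
    (μ : Measure α) [IsProbabilityMeasure μ] {s : Set α} (hs : MeasurableSet s) :
    (Measure.pi fun _ : ι => μ).real {ω | ∃ i, ω i ∉ s} =
      1 - μ.real s ^ Fintype.card ι := by
  have hcompl : {ω : ι → α | ∃ i, ω i ∉ s}ᶜ = univ.pi fun _ => s := by
    ext ω; simp
  rw [← compl_compl {ω : ι → α | ∃ i, ω i ∉ s}, probReal_compl_eq_one_sub, hcompl,
    measureReal_def, Measure.pi_pi, ENNReal.toReal_prod]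
  · simp [measureReal_def]
  · rw [hcompl]; exact .univ_pi fun _ => hs

lemma le_one_div_mul_sum_sq {N : ℕ} (hN : 0 < N) {x : ℝ} (ω : Fin N → ℝ) (i : Fin N)
    (h : N * x ≤ ω i ^ 2) : x ≤ 1 / (N : ℝ) * ∑ j, ω j ^ 2 := by
  rw [one_div, le_inv_mul_iff₀ (by positivity)]
  exact h.trans (Finset.single_le_sum (fun j _ => sq_nonneg (ω j)) (Finset.mem_univ i))

lemma half_le_one_sub_exp_neg {t : ℝ} (ht₀ : 0 ≤ t) (ht₁ : t ≤ 1) :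
    t / 2 ≤ 1 - exp (-t) := by
  have hexp := add_one_le_exp t
  have hinv : exp (-t) * exp t = 1 := by rw [← exp_add, neg_add_cancel, exp_zero]
  nlinarith [exp_pos (-t)]

lemma one_div_two_mul_le_one_sub_pow {N : ℕ} (hN : 1 ≤ N) {x : ℝ} (hx : 1 ≤ x) :
    1 / (2 * x) ≤ 1 - (1 - 1 / (N * x)) ^ N := by
  have hx₁ : 1 / x ≤ 1 := by rwa [div_le_one (by positivity)]
  have hpow : (1 - 1 / (N * x)) ^ N ≤ exp (-(1 / x)) := by
    convert one_sub_div_pow_le_exp_neg (hx₁.trans (Nat.one_le_cast.2 hN)) using 3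
    field_simp
  have hexp := half_le_one_sub_exp_neg (by positivity) hx₁
  calc 1 / (2 * x) = 1 / x / 2 := by ring
    _ ≤ 1 - (1 - 1 / (N * x)) ^ N := by linarith

/-- **Lemma 3** (Lecué–Mendelson). There is an absolute constant `c₁ > 0` such that for every
`N ≥ 2` and every `x ≥ 1` there is a mean-zero variance-one random variable `ζ` whose empirical
second moment `σ̂_N² = (1/N) ∑ᵢ ζᵢ²` over an iid sample satisfies
`P(σ̂_N² ≥ x) ≥ c₁ / x`. -/
theorem empirical_second_moment_heavy_tail :
    ∃ c₁ : ℝ, 0 < c₁ ∧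
      ∀ (N : ℕ), 2 ≤ N → ∀ x : ℝ, 1 ≤ x →
      ∃ (Ω : Type) (mΩ : MeasurableSpace Ω) (P : Measure Ω), IsProbabilityMeasure P ∧
      ∃ (ζ : Ω → ℝ) (ζi : Fin N → Ω → ℝ),
        Measurable ζ ∧
        (∫ ω, ζ ω ∂P) = 0 ∧ (∫ ω, (ζ ω) ^ 2 ∂P) = 1 ∧
        iIndepFun ζi P ∧
        (∀ i, IdentDistrib (ζi i) ζ P P) ∧
        c₁ / x ≤ (P {ω | x ≤ (1 / (N : ℝ)) * ∑ i, (ζi i ω) ^ 2}).toReal := by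
  refine ⟨1 / 2, by norm_num, fun N hN x hx => ?_⟩
  have hNx : 1 ≤ (N : ℝ) * x := one_le_mul_of_one_le_of_one_le (by norm_cast; omega) hx
  set a := √(N * x)
  have ha : a ^ 2 = N * x := sq_sqrt (by positivity)
  set p := 1 / (N * x)
  have hp₀ : 0 ≤ p := by positivity
  have hp₁ : p ≤ 1 := by rwa [div_le_one (by positivity)]
  have := isProbabilityMeasure_symmThreePoint a hp₀ hp₁
  set μ : Fin N → Measure ℝ := fun _ => symmThreePoint p a
  set P := Measure.pi μ
  let i₀ : Fin N := ⟨0, by omega⟩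
  refine ⟨Fin N → ℝ, inferInstance, P, inferInstance, fun ω => ω i₀, fun i ω => ω i,
    measurable_pi_apply i₀, ?_, ?_, iIndepFun_pi fun _ => aemeasurable_id,
    fun i => (identDistrib_eval_pi μ i).trans (identDistrib_eval_pi μ i₀).symm, ?_⟩
  · rw [integral_eval, integral_id_symmThreePoint a hp₀ hp₁]
  · rw [integral_comp_eval (f := fun y => y ^ 2) (by fun_prop),
      integral_sq_symmThreePoint a hp₀ hp₁, ha]
    exact one_div_mul_cancel (by positivity)
  · have hs : MeasurableSet {y : ℝ | y ^ 2 < a ^ 2} :=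
      measurableSet_lt (by fun_prop) (by fun_prop)
    calc 1 / 2 / x = 1 / (2 * x) := by ring
      _ ≤ 1 - (1 - p) ^ N := one_div_two_mul_le_one_sub_pow (by omega) hx
      _ = P.real {ω | ∃ i, ω i ∉ {y | y ^ 2 < a ^ 2}} := by
        rw [measureReal_pi_exists_notMem _ hs, Fintype.card_fin,
          measureReal_symmThreePoint_sq_lt a hp₀ hp₁ (sqrt_pos.2 (by positivity)).ne']
      _ ≤ P.real {ω | x ≤ (1 / (N : ℝ)) * ∑ i, ω i ^ 2} :=
        measureReal_mono fun ω ⟨i, hi⟩ =>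
          le_one_div_mul_sum_sq (by omega) ω i (ha ▸ not_lt.1 hi)
end
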